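/- Let q ≥ 1 be an integer and s ∈ (0, 3/2). If s ∈ (1/2, 1), then G_q(s) > 0; if s ∈ (0, 1/2) ∪ (1, 3/2), then G_q(s) < 0; and if s = 1/2 or s = 1, then G_q(s) = 0. -/

import Mathlib

/-- `G_q(s) = (q-1)^(3-2s) - 3 q^(3-2s) + 3 (q+1)^(3-2s) - (q+2)^(3-2s)`,
with the convention `0^(3-2s) = 0` (automatic for `rpow`). -/
noncomputable def GFn (s : ℝ) (q : ℕ) : ℝ :=
  ((q : ℝ) - 1) ^ (3 - 2 * s) - 3 * (q : ℝ) ^ (3 - 2 * s) + 3 * ((q : ℝ) + 1) ^ (3 - 2 * s)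
    - ((q : ℝ) + 2) ^ (3 - 2 * s)

/-!
With `α = 3 - 2s`, `G_q(s)` is minus the third forward difference of `x ↦ x ^ α` at `q - 1 ≥ 0`.
Two rounds of the mean value theorem write that difference as
`α (α - 1) (η₂ ^ (α - 2) - η₁ ^ (α - 2))` with `0 < η₁ < η₂`, whose sign is the sign of
`α (α - 1) (α - 2) = 2 (3 - 2s) (1 - s) (1 - 2s)`.
-/

open Set

theorem exists_sub_eq_of_hasDerivAt_Ioo_unit (f f' : ℝ → ℝ) {a : ℝ}
    (hf : ContinuousOn f (Icc a (a + 1))) (hf' : ∀ x ∈ Ioo a (a + 1), HasDerivAt f (f' x) x) :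
    ∃ c ∈ Ioo a (a + 1), f (a + 1) - f a = f' c := by
  obtain ⟨c, hc, hslope⟩ := exists_hasDerivAt_eq_slope f f' (lt_add_one a) hf hf'
  exact ⟨c, hc, by simpa using hslope.symm⟩

theorem exists_thirdDiff_eq_sub (f f' f'' : ℝ → ℝ) {a : ℝ}
    (hf : ContinuousOn f (Icc a (a + 3)))
    (hf' : ∀ x ∈ Ioo a (a + 3), HasDerivAt f (f' x) x)
    (hf'' : ∀ x ∈ Ioo a (a + 3), HasDerivAt f' (f'' x) x) :
    ∃ η₁ η₂, a < η₁ ∧ η₁ < η₂ ∧ η₂ < a + 3 ∧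
      f (a + 3) - 3 * f (a + 2) + 3 * f (a + 1) - f a = f'' η₂ - f'' η₁ := by
  set u : ℝ → ℝ := fun x => f (x + 2) - 2 * f (x + 1) + f x
  have hu : ContinuousOn u (Icc a (a + 1)) := by
    have shift (c : ℝ) (hc : 0 ≤ c) (hc' : c ≤ 2) :
        ContinuousOn (fun x => f (x + c)) (Icc a (a + 1)) :=
      hf.comp (continuousOn_id.add continuousOn_const)
        fun x hx => ⟨by linarith [hx.1], by linarith [hx.2]⟩
    have h0 := shift 0 le_rfl (by norm_num)
    simp only [add_zero] at h0
    exact ((shift 2 (by norm_num) le_rfl).sub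
      (continuousOn_const.mul (shift 1 (by norm_num) (by norm_num)))).add h0
  have hu' : ∀ x ∈ Ioo a (a + 1),
      HasDerivAt u (f' (x + 2) - 2 * f' (x + 1) + f' x) x := by
    intro x hx
    have shift (c : ℝ) (hc : 0 ≤ c) (hc' : c ≤ 2) :
        HasDerivAt (fun x => f (x + c)) (f' (x + c)) x :=
      (hf' (x + c) ⟨by linarith [hx.1], by linarith [hx.2]⟩).comp_add_const x c
    have h0 := shift 0 le_rfl (by norm_num)
    simp only [add_zero] at h0
    exact ((shift 2 (by norm_num) le_rfl).sub
      ((shift 1 (by norm_num) (by norm_num)).const_mul 2)).add h0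
  obtain ⟨ξ, hξ, hξu⟩ := exists_sub_eq_of_hasDerivAt_Ioo_unit u _ hu hu'
  have hf'_cont {b : ℝ} (hab : a < b) (hb : b + 1 < a + 3) : ContinuousOn f' (Icc b (b + 1)) :=
    fun x hx => (hf'' x ⟨by linarith [hx.1], by linarith [hx.2]⟩).continuousAt.continuousWithinAt
  have hf''_Ioo {b : ℝ} (hab : a < b) (hb : b + 1 < a + 3) :
      ∀ x ∈ Ioo b (b + 1), HasDerivAt f' (f'' x) x :=
    fun x hx => hf'' x ⟨by linarith [hx.1], by linarith [hx.2]⟩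
  obtain ⟨η₁, hη₁, hη₁f'⟩ := exists_sub_eq_of_hasDerivAt_Ioo_unit f' f''
    (hf'_cont hξ.1 (by linarith [hξ.2])) (hf''_Ioo hξ.1 (by linarith [hξ.2]))
  obtain ⟨η₂, hη₂, hη₂f'⟩ := exists_sub_eq_of_hasDerivAt_Ioo_unit f' f''
    (hf'_cont (b := ξ + 1) (by linarith [hξ.1]) (by linarith [hξ.2]))
    (hf''_Ioo (b := ξ + 1) (by linarith [hξ.1]) (by linarith [hξ.2]))
  refine ⟨η₁, η₂, by linarith [hξ.1, hη₁.1], by linarith [hη₁.2, hη₂.1],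
    by linarith [hξ.2, hη₂.2], ?_⟩
  have hdiff : u (a + 1) - u a = f (a + 3) - 3 * f (a + 2) + 3 * f (a + 1) - f a := by
    simp only [u]; ring_nf
  rw [← hdiff, hξu, ← hη₁f', ← hη₂f']
  ring_nf

theorem exists_rpow_thirdDiff_eq {α a : ℝ} (hα : 0 < α) (ha : 0 ≤ a) :
    ∃ η₁ η₂, 0 < η₁ ∧ η₁ < η₂ ∧
      (a + 3) ^ α - 3 * (a + 2) ^ α + 3 * (a + 1) ^ α - a ^ α
        = α * (α - 1) * (η₂ ^ (α - 2) - η₁ ^ (α - 2)) := by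
  have hpos {x : ℝ} (hx : x ∈ Ioo a (a + 3)) : x ≠ 0 := (ha.trans_lt hx.1).ne'
  obtain ⟨η₁, η₂, hη₁, hη₁₂, -, h⟩ := exists_thirdDiff_eq_sub (fun x => x ^ α)
    (fun x => α * x ^ (α - 1)) (fun x => α * ((α - 1) * x ^ (α - 2)))
    (continuous_id.rpow_const fun _ => Or.inr hα.le).continuousOn
    (fun x hx => Real.hasDerivAt_rpow_const (Or.inl (hpos hx)))
    (fun x hx => by
      simpa [sub_sub, one_add_one_eq_two] using
        (Real.hasDerivAt_rpow_const (p := α - 1) (Or.inl (hpos hx))).const_mul α)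
  exact ⟨η₁, η₂, ha.trans_lt hη₁, hη₁₂, by rw [h]; ring⟩

theorem stmt11 (q : ℕ) (hq : 1 ≤ q) (s : ℝ) (hs : s ∈ Set.Ioo (0 : ℝ) (3 / 2)) :
    (s ∈ Set.Ioo (1 / 2 : ℝ) 1 → 0 < GFn s q) ∧
    (s ∈ Set.Ioo (0 : ℝ) (1 / 2) ∪ Set.Ioo (1 : ℝ) (3 / 2) → GFn s q < 0) ∧
    (s = 1 / 2 ∨ s = 1 → GFn s q = 0) := by
  have hq' : (0 : ℝ) ≤ q - 1 := by rw [sub_nonneg]; exact_mod_cast hq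
  obtain ⟨η₁, η₂, hη₁, hη₁₂, hΔ⟩ :=
    exists_rpow_thirdDiff_eq (α := 3 - 2 * s) (by linarith [hs.2]) hq'
  have hG : GFn s q = -((3 - 2 * s) * (2 - 2 * s) * (η₂ ^ (1 - 2 * s) - η₁ ^ (1 - 2 * s))) := by
    rw [show (2 : ℝ) - 2 * s = 3 - 2 * s - 1 by ring, show (1 : ℝ) - 2 * s = 3 - 2 * s - 2 by ring,
      ← hΔ, GFn]
    ring_nf
  refine ⟨fun ⟨h1, h2⟩ => ?_, ?_, ?_⟩
  · have hD := Real.rpow_lt_rpow_of_neg hη₁ hη₁₂ (by linarith : 1 - 2 * s < 0)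
    have := mul_pos (mul_pos (by linarith : 0 < 3 - 2 * s) (by linarith : 0 < 2 - 2 * s))
      (sub_pos.2 hD)
    linarith
  · rintro (⟨h1, h2⟩ | ⟨h1, h2⟩)
    · have hD := Real.rpow_lt_rpow hη₁.le hη₁₂ (by linarith : 0 < 1 - 2 * s)
      have := mul_pos (mul_pos (by linarith : 0 < 3 - 2 * s) (by linarith : 0 < 2 - 2 * s))
        (sub_pos.2 hD)
      linarith
    · have hD := Real.rpow_lt_rpow_of_neg hη₁ hη₁₂ (by linarith : 1 - 2 * s < 0)
      have := mul_pos (by linarith : 0 < 3 - 2 * s)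
        (mul_pos_of_neg_of_neg (by linarith : 2 - 2 * s < 0) (sub_neg.2 hD))
      linarith
  · rintro (rfl | rfl) <;> norm_num [hG]
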